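/- arXiv:2004.01433 — 2 statements merged into one kernel-verified Lean document; each statement's English description precedes it below -/
import Mathlib

section
/- For u ∈ C⁵([0,1]) with prescribed exact endpoint derivative values, the Hermitian derivative satisfies (σ_x (u^{(1)})* − δ_x u*)_j = (h⁴/180)u^{(5)}(x_j) + O(h⁶) at each interior point j. -/
/-!
Expand `u'` to order 5 and `u` to order 6 about `x_j`. In the symmetric combinations
`u'(x + h) + u'(x - h)` and `u(x + h) - u(x - h)` the odd, respectively even, Taylor terms cancel,
and what survives of the polynomial parts in `σ_x (u')* − δ_x u*` is exactly `h⁴ u⁽⁵⁾(x) / 180`.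
The defect is therefore a fixed combination of four Lagrange remainders, each `O(K h⁶)`.
-/

open Set Finset Nat

noncomputable def taylorRemainder (f : ℝ → ℝ) (n : ℕ) (x t : ℝ) : ℝ :=
  f (x + t) - ∑ i ∈ range (n + 1), iteratedDeriv i f x * t ^ i / (i ! : ℝ)

theorem taylorWithinEval_uIcc_eq_sum {f : ℝ → ℝ} {n : ℕ} (hf : ContDiff ℝ n f) {x₀ x : ℝ}
    (hx : x₀ ≠ x) :
    taylorWithinEval f n (uIcc x₀ x) x₀ x =
      ∑ i ∈ range (n + 1), iteratedDeriv i f x₀ * (x - x₀) ^ i / i ! := by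
  rw [taylor_within_apply]
  refine sum_congr rfl fun i hi => ?_
  rw [iteratedDerivWithin_eq_iteratedDeriv (uniqueDiffOn_uIcc hx)
      ((hf.of_le (mod_cast mem_range_succ_iff.mp hi)).contDiffAt) left_mem_uIcc, smul_eq_mul]
  ring

theorem abs_taylorRemainder_le {f : ℝ → ℝ} {n : ℕ} (hf : ContDiff ℝ (n + 1) f) {x t K : ℝ}
    (hK : ∀ y ∈ uIcc x (x + t), |iteratedDeriv (n + 1) f y| ≤ K) :
    |taylorRemainder f n x t| ≤ K * |t| ^ (n + 1) / (n + 1)! := by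
  rcases eq_or_ne t 0 with rfl | ht
  · simp [taylorRemainder, sum_range_succ']
  have hx : x ≠ x + t := by simpa using ht
  obtain ⟨y, hy, hrem⟩ := taylor_mean_remainder_lagrange_iteratedDeriv hx hf.contDiffOn
  rw [taylorWithinEval_uIcc_eq_sum (hf.of_le (by norm_cast; omega)) hx, add_sub_cancel_left]
    at hrem
  rw [taylorRemainder, hrem, abs_div, abs_mul, abs_pow, Nat.abs_cast]
  gcongr
  exact hK y (uIoo_subset_uIcc_self hy)

theorem simpsonDeriv_sub_centeredDiff_sub_eq_taylorRemainder (u : ℝ → ℝ) (x : ℝ) {h : ℝ}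
    (hh : h ≠ 0) :
    (deriv u (x - h) + 4 * deriv u x + deriv u (x + h)) / 6
        - (u (x + h) - u (x - h)) / (2 * h) - h ^ 4 / 180 * iteratedDeriv 5 u x
      = (taylorRemainder (deriv u) 5 x h + taylorRemainder (deriv u) 5 x (-h)) / 6
        - (taylorRemainder u 6 x h - taylorRemainder u 6 x (-h)) / (2 * h) := by
  simp only [taylorRemainder, sum_range_succ, sum_range_zero, ← iteratedDeriv_succ', zero_add,
    iteratedDeriv_zero, iteratedDeriv_one, factorial, sub_eq_add_neg x h]
  field_simp
  ring

theorem abs_simpsonDeriv_sub_centeredDiff_sub_le {u : ℝ → ℝ} (hu : ContDiff ℝ 7 u)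
    {x h K : ℝ} (hh : 0 < h) (hK : ∀ y ∈ Icc (x - h) (x + h), |iteratedDeriv 7 u y| ≤ K) :
    |(deriv u (x - h) + 4 * deriv u x + deriv u (x + h)) / 6
        - (u (x + h) - u (x - h)) / (2 * h) - h ^ 4 / 180 * iteratedDeriv 5 u x|
      ≤ K * h ^ 6 / 1512 := by
  have hsub : ∀ t, |t| = h → uIcc x (x + t) ⊆ Icc (x - h) (x + h) := fun t ht =>
    uIcc_subset_Icc ⟨by linarith, by linarith⟩
      ⟨by linarith [neg_abs_le t], by linarith [le_abs_self t]⟩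
  have hu' : ContDiff ℝ (5 + 1) (deriv u) := hu.iterate_deriv' 6 1
  have hK' : ∀ y ∈ Icc (x - h) (x + h), |iteratedDeriv (5 + 1) (deriv u) y| ≤ K := by
    simpa only [← iteratedDeriv_succ'] using hK
  have remainder_le : ∀ t, |t| = h →
      |taylorRemainder (deriv u) 5 x t| ≤ K * h ^ 6 / 720 ∧
        |taylorRemainder u 6 x t| ≤ K * h ^ 7 / 5040 := fun t ht => by
    refine ⟨(abs_taylorRemainder_le hu' fun y hy => hK' y (hsub t ht hy)).trans_eq ?_,
      (abs_taylorRemainder_le hu fun y hy => hK y (hsub t ht hy)).trans_eq ?_⟩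
    all_goals rw [ht]; norm_num [factorial]
  obtain ⟨R1, R3⟩ := remainder_le h (abs_of_pos hh)
  obtain ⟨R2, R4⟩ := remainder_le (-h) (by rw [abs_neg, abs_of_pos hh])
  rw [simpsonDeriv_sub_centeredDiff_sub_eq_taylorRemainder u x hh.ne']
  set e1 := taylorRemainder (deriv u) 5 x h
  set e2 := taylorRemainder (deriv u) 5 x (-h)
  set e3 := taylorRemainder u 6 x h
  set e4 := taylorRemainder u 6 x (-h)
  calc |(e1 + e2) / 6 - (e3 - e4) / (2 * h)|
      ≤ |(e1 + e2) / 6| + |(e3 - e4) / (2 * h)| := abs_sub _ _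
    _ = |e1 + e2| / 6 + |e3 - e4| / (2 * h) := by
        rw [abs_div, abs_div, abs_of_pos (by positivity : 0 < 2 * h),
          abs_of_pos (by norm_num : (0 : ℝ) < 6)]
    _ ≤ (|e1| + |e2|) / 6 + (|e3| + |e4|) / (2 * h) := by
        gcongr
        exacts [abs_add_le _ _, abs_sub _ _]
    _ ≤ 2 * (K * h ^ 6 / 720) / 6 + 2 * (K * h ^ 7 / 5040) / (2 * h) := by
        gcongr <;> linarith
    _ = K * h ^ 6 / 1512 := by
        field_simp
        ring
/-- For smooth `u` on `[0,1]`, the Hermitian-derivative defect satisfies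
`(σ_x (u')* − δ_x u*)_j = (h⁴/180) u⁽⁵⁾(x_j) + O(h⁶)` at each interior point,
where `u'` plays the role of the prescribed exact derivative values. -/
theorem simpson_deriv_minus_centeredDiff_truncation :
    ∃ C : ℝ, 0 < C ∧
      ∀ (u : ℝ → ℝ), ContDiff ℝ 7 u →
        ∀ K : ℝ, (∀ i ≤ 7, ∀ x ∈ Icc (0 : ℝ) 1, |iteratedDeriv i u x| ≤ K) →
          ∀ (N : ℕ), 2 ≤ N →
            ∀ h : ℝ, h = 1 / N →
              ∀ j : ℕ, 1 ≤ j → j ≤ N - 1 →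
                |(deriv u ((j - 1 : ℕ) * h) + 4 * deriv u (j * h)
                      + deriv u ((j + 1 : ℕ) * h)) / 6
                    - (u ((j + 1 : ℕ) * h) - u ((j - 1 : ℕ) * h)) / (2 * h)
                    - (h ^ 4 / 180) * iteratedDeriv 5 u (j * h)|
                  ≤ C * K * h ^ 6 := by
  refine ⟨1 / 1512, by norm_num, fun u hu K hK N hN h hh j hj1 hjN => ?_⟩
  have hN0 : (0 : ℝ) < N := by exact_mod_cast (by omega : 0 < N)
  have hNh : N * h = 1 := by rw [hh]; field_simp
  have hprev : ((j - 1 : ℕ) : ℝ) * h = j * h - h := by push_cast [hj1]; ring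
  have hnext : ((j + 1 : ℕ) : ℝ) * h = j * h + h := by push_cast; ring
  have hj : (j : ℝ) + 1 ≤ N := by exact_mod_cast (by omega : j + 1 ≤ N)
  have hh0 : 0 < h := by rw [hh]; exact one_div_pos.mpr hN0
  have hgrid : Icc (j * h - h) (j * h + h) ⊆ Icc 0 1 := Icc_subset_Icc
    (by nlinarith [(Nat.one_le_cast (α := ℝ)).mpr hj1]) (by nlinarith)
  rw [hprev, hnext]
  calc _ ≤ K * h ^ 6 / 1512 := abs_simpsonDeriv_sub_centeredDiff_sub_le hu hh0
          fun y hy => hK 7 le_rfl y (hgrid hy)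
    _ = 1 / 1512 * K * h ^ 6 := by ring
end

section
/- For smooth u on [0,1], the compact second-order difference operator satisfies (δ̃_x² u*)_j = u''(x_j) + O(h⁴) for all j with 2 ≤ j ≤ N−2, assuming the Hermitian derivative satisfies (ũ_x)_j = u'(x_j) − (h⁴/180)u^{(5)}(x_j) + O(h⁶) at interior points. -/
open Set Finset
lemma my_ids {k m : ℕ} (hmk : m ≤ k) {f : ℝ → ℝ} (hf : ContDiff ℝ (k : ℕ) f)
    {s : Set ℝ} (hs : UniqueDiffOn ℝ s) {x : ℝ} (hx : x ∈ s) :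
    iteratedDerivWithin m f s x = iteratedDeriv m f x := by
  have H : HasFTaylorSeriesUpTo (k : ℕ∞) f (ftaylorSeries ℝ f) :=
    contDiff_iff_ftaylorSeries.mp (by exact_mod_cast hf)
  have h2 := (H.hasFTaylorSeriesUpToOn s).eq_iteratedFDerivWithin_of_uniqueDiffOn
    (m := m) (by exact_mod_cast hmk) hs hx
  rw [iteratedDerivWithin_eq_iteratedFDerivWithin, iteratedDeriv_eq_iteratedFDeriv, ← h2]
  rfl

lemma taylor_right (n : ℕ) (f : ℝ → ℝ) (hf : ContDiff ℝ ((n+1 : ℕ)) f) (K a t : ℝ) (ht : 0 ≤ t)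
    (hK : ∀ x ∈ Icc a (a+t), |iteratedDeriv (n+1) f x| ≤ K) :
    |f (a+t) - ∑ i ∈ Finset.range (n+1), (i.factorial : ℝ)⁻¹ * t^i * iteratedDeriv i f a|
      ≤ K * t^(n+1) / n.factorial := by
  rcases eq_or_lt_of_le ht with rfl | ht'
  · simp [Finset.sum_range_succ']
  · have hub : UniqueDiffOn ℝ (Icc a (a+t)) := uniqueDiffOn_Icc (by linarith)
    have hmr := taylor_mean_remainder_bound (f := f) (a := a) (b := a+t) (C := K) (n := n)
      (by linarith) (by exact_mod_cast hf.contDiffOn)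
      (right_mem_Icc.mpr (by linarith)) ?_
    · rw [taylor_within_apply, Real.norm_eq_abs] at hmr
      have hsum : ∑ k ∈ Finset.range (n+1),
          (((k.factorial : ℝ))⁻¹ * (a + t - a)^k) • iteratedDerivWithin k f (Icc a (a+t)) a
          = ∑ i ∈ Finset.range (n+1), (i.factorial : ℝ)⁻¹ * t^i * iteratedDeriv i f a := by
        refine Finset.sum_congr rfl fun i hi => ?_
        rw [my_ids ((Nat.le_of_lt_succ (Finset.mem_range.mp hi)).trans (Nat.le_succ n)) hf hub
          (left_mem_Icc.mpr (by linarith))]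
        rw [smul_eq_mul, add_sub_cancel_left]
      rw [hsum, add_sub_cancel_left] at hmr
      exact hmr
    · intro y hy
      rw [Real.norm_eq_abs, my_ids le_rfl hf hub hy]
      exact hK y hy

lemma taylor_left (n : ℕ) (f : ℝ → ℝ) (hf : ContDiff ℝ ((n+1 : ℕ)) f) (K a t : ℝ) (ht : t ≤ 0)
    (hK : ∀ x ∈ Icc (a+t) a, |iteratedDeriv (n+1) f x| ≤ K) :
    |f (a+t) - ∑ i ∈ Finset.range (n+1), (i.factorial : ℝ)⁻¹ * t^i * iteratedDeriv i f a|
      ≤ K * (-t)^(n+1) / n.factorial := by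
  set g : ℝ → ℝ := fun y => f (2*a - y) with hg
  have hgc : ContDiff ℝ ((n+1 : ℕ)) g := hf.comp (contDiff_const.sub contDiff_id)
  have hgiter : ∀ (m : ℕ) (y : ℝ), iteratedDeriv m g y = (-1:ℝ)^m * iteratedDeriv m f (2*a - y) := by
    intro m y
    set F : ℝ → ℝ := fun z => f (2*a + z) with hF
    have h1 : g = fun y => F (-y) := by
      funext y; simp [hg, hF, sub_eq_add_neg]
    rw [h1, iteratedDeriv_comp_neg, hF, iteratedDeriv_comp_const_add]
    simp [smul_eq_mul, sub_eq_add_neg]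
  have key := taylor_right n g hgc K a (-t) (by linarith) ?_
  · have hga : g (a + -t) = f (a + t) := by simp only [hg]; ring_nf
    have hsum : ∑ i ∈ Finset.range (n+1), (i.factorial : ℝ)⁻¹ * (-t)^i * iteratedDeriv i g a
        = ∑ i ∈ Finset.range (n+1), (i.factorial : ℝ)⁻¹ * t^i * iteratedDeriv i f a := by
      refine Finset.sum_congr rfl fun i _ => ?_
      rw [hgiter, show 2*a - a = a by ring]
      have h2 : (-t:ℝ)^i * (-1:ℝ)^i = t^i := by rw [← mul_pow]; norm_num
      linear_combination ((i.factorial : ℝ))⁻¹ * iteratedDeriv i f a * h2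
    rw [hga, hsum] at key
    exact key
  · intro y hy
    rw [hgiter]
    have : |(-1:ℝ)^(n+1) * iteratedDeriv (n+1) f (2*a - y)| = |iteratedDeriv (n+1) f (2*a - y)| := by
      rw [abs_mul, abs_pow, abs_neg, abs_one, one_pow, one_mul]
    rw [this]
    exact hK _ ⟨by linarith [hy.2], by linarith [hy.1]⟩

lemma taylor_est (n : ℕ) (f : ℝ → ℝ) (hf : ContDiff ℝ ((n+1 : ℕ)) f) (K a t : ℝ)
    (hK : ∀ x ∈ Icc (0:ℝ) 1, |iteratedDeriv (n+1) f x| ≤ K)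
    (ha : a ∈ Icc (0:ℝ) 1) (hat : a + t ∈ Icc (0:ℝ) 1) :
    |f (a+t) - ∑ i ∈ Finset.range (n+1), (i.factorial : ℝ)⁻¹ * t^i * iteratedDeriv i f a|
      ≤ K * |t|^(n+1) / n.factorial := by
  rcases le_or_gt 0 t with ht | ht
  · rw [abs_of_nonneg ht]
    exact taylor_right n f hf K a t ht fun x hx =>
      hK x ⟨le_trans ha.1 hx.1, le_trans hx.2 hat.2⟩
  · rw [abs_of_neg ht]
    exact taylor_left n f hf K a t ht.le fun x hx =>
      hK x ⟨le_trans hat.1 hx.1, le_trans hx.2 ha.2⟩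

lemma taylor5 (u : ℝ → ℝ) (hu : ContDiff ℝ 6 u) (K a t : ℝ)
    (hK : ∀ x ∈ Icc (0:ℝ) 1, |iteratedDeriv 6 u x| ≤ K)
    (ha : a ∈ Icc (0:ℝ) 1) (hat : a + t ∈ Icc (0:ℝ) 1) :
    |u (a+t) - (u a + deriv u a * t + iteratedDeriv 2 u a * t^2/2 + iteratedDeriv 3 u a * t^3/6
      + iteratedDeriv 4 u a * t^4/24 + iteratedDeriv 5 u a * t^5/120)| ≤ K * |t|^6/120 := by
  have hu' : ContDiff ℝ ((5+1 : ℕ)) u := by exact_mod_cast hu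
  have h := taylor_est 5 u hu' K a t (fun x hx => hK x hx) ha hat
  have hs : ∑ i ∈ Finset.range (5+1), (i.factorial : ℝ)⁻¹ * t^i * iteratedDeriv i u a
      = u a + deriv u a * t + iteratedDeriv 2 u a * t^2/2 + iteratedDeriv 3 u a * t^3/6
      + iteratedDeriv 4 u a * t^4/24 + iteratedDeriv 5 u a * t^5/120 := by
    simp [Finset.sum_range_succ, Nat.factorial, iteratedDeriv_one]
    ring
  rw [hs] at h
  have e : K * |t|^(5+1)/((5:ℕ).factorial : ℝ) = K * |t|^6/120 := by
    norm_num [Nat.factorial]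
  linarith [h, e.le, e.ge]

lemma taylor4 (u : ℝ → ℝ) (hu : ContDiff ℝ 6 u) (K a t : ℝ)
    (hK : ∀ x ∈ Icc (0:ℝ) 1, |iteratedDeriv 6 u x| ≤ K)
    (ha : a ∈ Icc (0:ℝ) 1) (hat : a + t ∈ Icc (0:ℝ) 1) :
    |deriv u (a+t) - (deriv u a + iteratedDeriv 2 u a * t + iteratedDeriv 3 u a * t^2/2
      + iteratedDeriv 4 u a * t^3/6 + iteratedDeriv 5 u a * t^4/24)| ≤ K * |t|^5/24 := by
  have hu6 : ContDiff ℝ (((5:ℕ) : WithTop ℕ∞) + 1) u := by exact_mod_cast hu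
  have hu' : ContDiff ℝ ((4+1 : ℕ)) (deriv u) := by
    exact_mod_cast (contDiff_succ_iff_deriv.mp hu6).2.2
  have hKd : ∀ x ∈ Icc (0:ℝ) 1, |iteratedDeriv (4+1) (deriv u) x| ≤ K := by
    intro x hx
    rw [show (4+1 : ℕ) = 5 from rfl, ← iteratedDeriv_succ']
    exact hK x hx
  have h := taylor_est 4 (deriv u) hu' K a t hKd ha hat
  have hs : ∑ i ∈ Finset.range (4+1), (i.factorial : ℝ)⁻¹ * t^i * iteratedDeriv i (deriv u) a
      = deriv u a + iteratedDeriv 2 u a * t + iteratedDeriv 3 u a * t^2/2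
      + iteratedDeriv 4 u a * t^3/6 + iteratedDeriv 5 u a * t^4/24 := by
    simp [Finset.sum_range_succ, Nat.factorial, ← iteratedDeriv_succ']
    ring
  rw [hs] at h
  have e : K * |t|^(4+1)/((4:ℕ).factorial : ℝ) = K * |t|^5/24 := by
    norm_num [Nat.factorial]
  linarith [h, e.le, e.ge]

lemma taylor0 (u : ℝ → ℝ) (hu : ContDiff ℝ 6 u) (K a t : ℝ)
    (hK : ∀ x ∈ Icc (0:ℝ) 1, |iteratedDeriv 6 u x| ≤ K)
    (ha : a ∈ Icc (0:ℝ) 1) (hat : a + t ∈ Icc (0:ℝ) 1) :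
    |iteratedDeriv 5 u (a+t) - iteratedDeriv 5 u a| ≤ K * |t| := by
  have hu' : ContDiff ℝ ((0+1 : ℕ)) (iteratedDeriv 5 u) := by
    rw [iteratedDeriv_eq_iterate]
    exact ContDiff.iterate_deriv' 1 5 (by exact_mod_cast hu)
  have hKd : ∀ x ∈ Icc (0:ℝ) 1, |iteratedDeriv (0+1) (iteratedDeriv 5 u) x| ≤ K := by
    intro x hx
    rw [show (0+1 : ℕ) = 1 from rfl, iteratedDeriv_one, ← iteratedDeriv_succ]
    exact hK x hx
  have h := taylor_est 0 (iteratedDeriv 5 u) hu' K a t hKd ha hat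
  simp [Finset.sum_range_succ] at h
  have e : K * |t|^(0+1)/((0:ℕ).factorial : ℝ) = K * |t| := by
    norm_num [Nat.factorial]
  calc |iteratedDeriv 5 u (a+t) - iteratedDeriv 5 u a| ≤ K * |t|^(0+1)/((0:ℕ).factorial : ℝ) := by
        simpa using h
    _ = K * |t| := e

lemma abs_sub'' (a b : ℝ) : |a - b| ≤ |a| + |b| := by
  rw [sub_eq_add_neg]
  exact (abs_add_le _ _).trans (by rw [abs_neg])

lemma hfinal_lemma (K K₁ h : ℝ) (hK : 0 ≤ K) (hK₁ : 0 ≤ K₁) (h0 : 0 < h) (h1 : h ≤ 1) :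
    4 * (K * h ^ 6 / 120 + K * h ^ 6 / 120) + h * (K * h ^ 5 / 24 + K * h ^ 5 / 24)
      + (h^5/180) * (K * h + K * h) + h * (K₁ * h ^ 6 + K₁ * h ^ 6)
      ≤ 1 * (K + K₁) * h ^ 4 * (2 * h ^ 2) := by
  nlinarith [mul_nonneg hK (pow_nonneg h0.le 6),
    mul_nonneg (mul_nonneg hK₁ (pow_nonneg h0.le 6)) (by linarith : (0:ℝ) ≤ 1 - h)]

lemma abs4 (A B C D : ℝ) : |A - B + C - D| ≤ |A| + |B| + |C| + |D| := by
  have h1 : |A - B + C - D| ≤ |A - B + C| + |D| := abs_sub'' _ _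
  have h2 : |A - B + C| ≤ |A - B| + |C| := abs_add_le _ _
  have h3 : |A - B| ≤ |A| + |B| := abs_sub'' _ _
  linarith

set_option maxHeartbeats 1000000 in
/-- For smooth `u` on `[0,1]`, assuming the Hermitian derivative `ux`
satisfies `ux_j = u'(x_j) − (h⁴/180) u⁽⁵⁾(x_j) + O(h⁶)` at interior points, the compact
second-order difference `δ̃_x² u* = 2 δ_x² u* − δ_x ux` satisfies
`(δ̃_x² u*)_j = u''(x_j) + O(h⁴)` for `2 ≤ j ≤ N−2`. -/
theorem compact_secondDiff_truncation_interior :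
    ∃ C : ℝ, 0 < C ∧
      ∀ (u : ℝ → ℝ), ContDiff ℝ 6 u →
        ∀ K : ℝ, (∀ i ≤ 6, ∀ x ∈ Icc (0 : ℝ) 1, |iteratedDeriv i u x| ≤ K) →
          ∀ (N : ℕ), 4 ≤ N →
            ∀ h : ℝ, h = 1 / N →
              ∀ (ux : ℕ → ℝ) (K₁ : ℝ), 0 ≤ K₁ →
                (∀ j : ℕ, 1 ≤ j → j ≤ N - 1 →
                  |ux j - deriv u (j * h) + (h ^ 4 / 180) * iteratedDeriv 5 u (j * h)|
                    ≤ K₁ * h ^ 6) →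
                ∀ j : ℕ, 2 ≤ j → j ≤ N - 2 →
                  |2 * ((u ((j + 1 : ℕ) * h) - 2 * u (j * h) + u ((j - 1 : ℕ) * h)) / h ^ 2)
                      - (ux (j + 1) - ux (j - 1)) / (2 * h)
                      - iteratedDeriv 2 u (j * h)|
                    ≤ C * (K + K₁) * h ^ 4 := by
  refine ⟨1, one_pos, ?_⟩
  intro u hu K hK N hN h hh ux K₁ hK₁ hux j hj1 hj2
  have hN0 : (0:ℝ) < (N:ℝ) := by exact_mod_cast (by omega : 0 < N)
  have hh0 : 0 < h := by rw [hh]; positivity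
  have hNh : (N:ℝ) * h = 1 := by rw [hh]; field_simp
  have hN1 : (1:ℝ) ≤ (N:ℝ) := by exact_mod_cast (by omega : 1 ≤ N)
  have hh1 : h ≤ 1 := by nlinarith
  set x : ℝ := (j:ℝ) * h with hxdef
  have hjn : j + 2 ≤ N := by omega
  have hjR : (j:ℝ) + 2 ≤ (N:ℝ) := by exact_mod_cast hjn
  have hj2R : (2:ℝ) ≤ (j:ℝ) := by exact_mod_cast hj1
  have hx01 : x ∈ Icc (0:ℝ) 1 := by
    constructor
    · positivity
    · nlinarith [mul_nonneg (by linarith : (0:ℝ) ≤ (N:ℝ) - (j:ℝ)) hh0.le]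
  have hxp : x + h ∈ Icc (0:ℝ) 1 := by
    constructor
    · positivity
    · nlinarith [mul_nonneg (by linarith : (0:ℝ) ≤ (N:ℝ) - (j:ℝ) - 1) hh0.le]
  have hxm : x - h ∈ Icc (0:ℝ) 1 := by
    constructor
    · nlinarith [mul_nonneg (by linarith : (0:ℝ) ≤ (j:ℝ) - 1) hh0.le]
    · have := hx01.2; linarith
  have hxm' : x + -h ∈ Icc (0:ℝ) 1 := by rw [← sub_eq_add_neg]; exact hxm
  have c1 : ((j+1 : ℕ) : ℝ) * h = x + h := by rw [hxdef]; push_cast; ring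
  have c2 : ((j-1 : ℕ) : ℝ) * h = x - h := by
    rw [Nat.cast_sub (by omega : 1 ≤ j), hxdef]; push_cast; ring
  rw [c1, c2]
  have hK6 : ∀ y ∈ Icc (0:ℝ) 1, |iteratedDeriv 6 u y| ≤ K := fun y hy => hK 6 le_rfl y hy
  have hKnn : 0 ≤ K :=
    le_trans (abs_nonneg _) (hK 0 (by norm_num) 0 (left_mem_Icc.mpr zero_le_one))
  have hA1 := taylor5 u hu K x h hK6 hx01 hxp
  have hA2 := taylor5 u hu K x (-h) hK6 hx01 hxm'
  have hB1 := taylor4 u hu K x h hK6 hx01 hxp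
  have hB2 := taylor4 u hu K x (-h) hK6 hx01 hxm'
  have hC1 := taylor0 u hu K x h hK6 hx01 hxp
  have hC2 := taylor0 u hu K x (-h) hK6 hx01 hxm'
  rw [abs_of_pos hh0] at hA1 hB1 hC1
  rw [abs_neg, abs_of_pos hh0] at hA2 hB2 hC2
  rw [show x + -h = x - h from by ring] at hA2 hB2 hC2
  have hp := hux (j+1) (by omega) (by omega)
  have hm := hux (j-1) (by omega) (by omega)
  rw [c1] at hp
  rw [c2] at hm
  set D0 := u x with hD0
  set D1 := deriv u x with hD1
  set D2 := iteratedDeriv 2 u x with hD2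
  set D3 := iteratedDeriv 3 u x with hD3
  set D4 := iteratedDeriv 4 u x with hD4
  set D5 := iteratedDeriv 5 u x with hD5
  set ap := u (x + h) - (D0 + D1 * h + D2 * h ^ 2 / 2 + D3 * h ^ 3 / 6
      + D4 * h ^ 4 / 24 + D5 * h ^ 5 / 120) with hap
  set am := u (x - h) - (D0 + D1 * -h + D2 * (-h) ^ 2 / 2 + D3 * (-h) ^ 3 / 6
      + D4 * (-h) ^ 4 / 24 + D5 * (-h) ^ 5 / 120) with ham
  set bp := deriv u (x + h) - (D1 + D2 * h + D3 * h ^ 2 / 2 + D4 * h ^ 3 / 6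
      + D5 * h ^ 4 / 24) with hbp
  set bm := deriv u (x - h) - (D1 + D2 * -h + D3 * (-h) ^ 2 / 2 + D4 * (-h) ^ 3 / 6
      + D5 * (-h) ^ 4 / 24) with hbm
  set fp := iteratedDeriv 5 u (x + h) - D5 with hfp
  set fm := iteratedDeriv 5 u (x - h) - D5 with hfm
  set ep := ux (j+1) - deriv u (x + h) + h ^ 4 / 180 * iteratedDeriv 5 u (x + h) with hep
  set em := ux (j-1) - deriv u (x - h) + h ^ 4 / 180 * iteratedDeriv 5 u (x - h) with hem
  have hA1' : |ap| ≤ K * h ^ 6 / 120 := hA1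
  have hA2' : |am| ≤ K * h ^ 6 / 120 := hA2
  have hB1' : |bp| ≤ K * h ^ 5 / 24 := hB1
  have hB2' : |bm| ≤ K * h ^ 5 / 24 := hB2
  have hC1' : |fp| ≤ K * h := hC1
  have hC2' : |fm| ≤ K * h := hC2
  have hp' : |ep| ≤ K₁ * h ^ 6 := hp
  have hm' : |em| ≤ K₁ * h ^ 6 := hm
  have eq1 : u (x + h) = D0 + D1 * h + D2 * h ^ 2 / 2 + D3 * h ^ 3 / 6
      + D4 * h ^ 4 / 24 + D5 * h ^ 5 / 120 + ap := by rw [hap]; ring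
  have eq2 : u (x - h) = D0 + D1 * -h + D2 * (-h) ^ 2 / 2 + D3 * (-h) ^ 3 / 6
      + D4 * (-h) ^ 4 / 24 + D5 * (-h) ^ 5 / 120 + am := by rw [ham]; ring
  have eq3 : deriv u (x + h) = D1 + D2 * h + D3 * h ^ 2 / 2 + D4 * h ^ 3 / 6
      + D5 * h ^ 4 / 24 + bp := by rw [hbp]; ring
  have eq4 : deriv u (x - h) = D1 + D2 * -h + D3 * (-h) ^ 2 / 2 + D4 * (-h) ^ 3 / 6
      + D5 * (-h) ^ 4 / 24 + bm := by rw [hbm]; ring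
  have eq5 : iteratedDeriv 5 u (x + h) = D5 + fp := by rw [hfp]; ring
  have eq6 : iteratedDeriv 5 u (x - h) = D5 + fm := by rw [hfm]; ring
  have eq7 : ux (j+1) = ep + deriv u (x + h) - h ^ 4 / 180 * iteratedDeriv 5 u (x + h) := by
    rw [hep]; ring
  have eq8 : ux (j-1) = em + deriv u (x - h) - h ^ 4 / 180 * iteratedDeriv 5 u (x - h) := by
    rw [hem]; ring
  have hne : h ≠ 0 := ne_of_gt hh0
  have hEq : 2 * ((u (x + h) - 2 * D0 + u (x - h)) / h ^ 2) - (ux (j+1) - ux (j-1)) / (2*h) - D2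
      = 2*(ap+am)/h^2 - (bp - bm)/(2*h) + (h^3/360)*(fp - fm) - (ep - em)/(2*h) := by
    rw [eq7, eq8, eq1, eq2, eq3, eq4, eq5, eq6]
    field_simp
    ring
  rw [hEq]
  have h2h : (0:ℝ) < 2 * h ^ 2 := by positivity
  refine le_of_mul_le_mul_right ?_ h2h
  rw [← abs_of_pos h2h, ← abs_mul]
  have hprod : (2*(ap+am)/h^2 - (bp - bm)/(2*h) + (h^3/360)*(fp - fm) - (ep - em)/(2*h))
      * (2 * h ^ 2)
      = 4*(ap+am) - h*(bp - bm) + (h^5/180)*(fp - fm) - h*(ep - em) := by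
    field_simp
    ring
  rw [hprod, abs_of_pos h2h]
  refine le_trans (abs4 _ _ _ _) ?_
  have t1 : |4*(ap+am)| ≤ 4 * (K * h ^ 6 / 120 + K * h ^ 6 / 120) := by
    rw [abs_mul, abs_of_pos (by norm_num : (0:ℝ) < 4)]
    linarith [abs_add_le ap am]
  have t2 : |h*(bp - bm)| ≤ h * (K * h ^ 5 / 24 + K * h ^ 5 / 24) := by
    rw [abs_mul, abs_of_pos hh0]
    exact mul_le_mul_of_nonneg_left (le_trans (abs_sub'' _ _) (by linarith)) hh0.le
  have t3 : |(h^5/180)*(fp - fm)| ≤ (h^5/180) * (K * h + K * h) := by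
    rw [abs_mul, abs_of_pos (by positivity : (0:ℝ) < h^5/180)]
    exact mul_le_mul_of_nonneg_left (le_trans (abs_sub'' _ _) (by linarith)) (by positivity)
  have t4 : |h*(ep - em)| ≤ h * (K₁ * h ^ 6 + K₁ * h ^ 6) := by
    rw [abs_mul, abs_of_pos hh0]
    exact mul_le_mul_of_nonneg_left (le_trans (abs_sub'' _ _) (by linarith)) hh0.le
  linarith [t1, t2, t3, t4, hfinal_lemma K K₁ h hKnn hK₁ hh0 hh1]
end
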